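/- For every integer k ≥ 0, every smooth function φ : ℝ^n × ℝ^n → ℝ that is a homogeneous polynomial of degree k in w with coefficients smooth in z, and every smooth f : ℝ^n → ℝ, one has, on ℝ^n × B: {H_{k,φ}, H_{0,f}} = (1−‖w‖²)^{(2−k)/2}·∑_{j=1}^n (∂φ/∂w_j)·(∂f/∂z_j) + (1−‖w‖²)^{−k/2}·( (k−1)·φ·∑_{j=1}^n w_j·(∂f/∂z_j) + f·∑_{j=1}^n w_j·(∂φ/∂z_j) ), where H_{0,f}(z,w) = f(z)·√(1−‖w‖²). -/

import Mathlib

open Real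

/-- The Poisson bracket `{F,G} = ∑_j (∂F/∂w_j·∂G/∂z_j − ∂F/∂z_j·∂G/∂w_j)` of smooth
functions on (an open subset of) `ℝ^n_z × ℝ^n_w`. -/
noncomputable def pbn {n : ℕ}
    (F G : EuclideanSpace ℝ (Fin n) × EuclideanSpace ℝ (Fin n) → ℝ)
    (p : EuclideanSpace ℝ (Fin n) × EuclideanSpace ℝ (Fin n)) : ℝ :=
  ∑ j : Fin n,
    (fderiv ℝ F p (0, EuclideanSpace.single j 1) * fderiv ℝ G p (EuclideanSpace.single j 1, 0)
      - fderiv ℝ F p (EuclideanSpace.single j 1, 0) * fderiv ℝ G p (0, EuclideanSpace.single j 1))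

/-- `H_{k,φ}(z,w) = φ(z,w)·(1−‖w‖²)^((1−k)/2)`. -/
noncomputable def Hk {n : ℕ} (k : ℕ)
    (φ : EuclideanSpace ℝ (Fin n) × EuclideanSpace ℝ (Fin n) → ℝ)
    (p : EuclideanSpace ℝ (Fin n) × EuclideanSpace ℝ (Fin n)) : ℝ :=
  φ p * (1 - ‖p.2‖ ^ 2) ^ ((1 - (k : ℝ)) / 2)

section aux

variable {n : ℕ}

local notation "E" => EuclideanSpace ℝ (Fin n)

/-- derivative of `q ↦ 1 - ‖q.2‖²` on the product. -/
noncomputable def uDeriv (p : E × E) : (E × E) →L[ℝ] ℝ :=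
  -((fderivInnerCLM ℝ (p.2, p.2)).comp
      ((ContinuousLinearMap.snd ℝ E E).prod (ContinuousLinearMap.snd ℝ E E)))

lemma hasFDerivAt_u (p : E × E) :
    HasFDerivAt (fun q : E × E => (1 : ℝ) - ‖q.2‖ ^ 2) (uDeriv p) p := by
  have h1 : HasFDerivAt (fun q : E × E => (inner ℝ q.2 q.2 : ℝ))
      ((fderivInnerCLM ℝ (p.2, p.2)).comp
        ((ContinuousLinearMap.snd ℝ E E).prod (ContinuousLinearMap.snd ℝ E E))) p :=
    (hasFDerivAt_snd.inner ℝ hasFDerivAt_snd)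
  have h2 := h1.const_sub 1
  simpa only [real_inner_self_eq_norm_sq, uDeriv] using h2

lemma hasFDerivAt_mul_rpow (ψ : E × E → ℝ) (c : ℝ) (p : E × E)
    (hψ : DifferentiableAt ℝ ψ p) (hu : (1 : ℝ) - ‖p.2‖ ^ 2 ≠ 0) :
    HasFDerivAt (fun q : E × E => ψ q * (1 - ‖q.2‖ ^ 2) ^ c)
      (ψ p • ((c * (1 - ‖p.2‖ ^ 2) ^ (c - 1)) • uDeriv p)
        + ((1 - ‖p.2‖ ^ 2) ^ c) • fderiv ℝ ψ p) p :=
  hψ.hasFDerivAt.mul ((hasFDerivAt_u p).rpow_const (Or.inl hu))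

end aux

/-- for `φ` a fiberwise homogeneous polynomial of degree `k` in `w` with
coefficients smooth in `z` and `f` smooth, on `ℝ^n × B`:
`{H_{k,φ}, H_{0,f}} = (1−‖w‖²)^((2−k)/2)·∑_j ∂φ/∂w_j·∂f/∂z_j
 + (1−‖w‖²)^(−k/2)·((k−1)·φ·∑_j w_j·∂f/∂z_j + f·∑_j w_j·∂φ/∂z_j)`. -/
theorem poisson_bracket_Hk_H0 (n k : ℕ)
    (φ : EuclideanSpace ℝ (Fin n) × EuclideanSpace ℝ (Fin n) → ℝ)
    (f : EuclideanSpace ℝ (Fin n) → ℝ)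
    (hφ : ContDiff ℝ (⊤ : ℕ∞) φ) (hf : ContDiff ℝ (⊤ : ℕ∞) f)
    (hφhom : ∀ (z w : EuclideanSpace ℝ (Fin n)) (t : ℝ), φ (z, t • w) = t ^ k * φ (z, w)) :
    ∀ p : EuclideanSpace ℝ (Fin n) × EuclideanSpace ℝ (Fin n), ‖p.2‖ < 1 →
      pbn (Hk k φ) (Hk 0 (fun q => f q.1)) p
        = (1 - ‖p.2‖ ^ 2) ^ ((2 - (k : ℝ)) / 2) *
            (∑ j : Fin n, fderiv ℝ φ p (0, EuclideanSpace.single j 1)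
              * fderiv ℝ f p.1 (EuclideanSpace.single j 1))
          + (1 - ‖p.2‖ ^ 2) ^ (-(k : ℝ) / 2) *
            (((k : ℝ) - 1) * φ p *
                (∑ j : Fin n, p.2 j * fderiv ℝ f p.1 (EuclideanSpace.single j 1))
              + f p.1 *
                (∑ j : Fin n, p.2 j * fderiv ℝ φ p (EuclideanSpace.single j 1, 0))) := by
  intro p hp
  have hu : (0 : ℝ) < 1 - ‖p.2‖ ^ 2 := by
    have := pow_lt_one₀ (norm_nonneg p.2) hp two_ne_zero
    linarith
  set u : ℝ := 1 - ‖p.2‖ ^ 2 with hu_def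
  have hF : HasFDerivAt (Hk k φ)
      (φ p • ((((1 - (k : ℝ)) / 2) * u ^ ((1 - (k : ℝ)) / 2 - 1)) • uDeriv p)
        + (u ^ ((1 - (k : ℝ)) / 2)) • fderiv ℝ φ p) p :=
    hasFDerivAt_mul_rpow φ _ p (hφ.differentiable (by simp) p) hu.ne'
  have hg : HasFDerivAt (fun q : EuclideanSpace ℝ (Fin n) × EuclideanSpace ℝ (Fin n) => f q.1)
      ((fderiv ℝ f p.1).comp (ContinuousLinearMap.fst ℝ _ _)) p :=
    ((hf.differentiable (by simp) p.1).hasFDerivAt).comp p hasFDerivAt_fst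
  have hgd : fderiv ℝ (fun q : EuclideanSpace ℝ (Fin n) × EuclideanSpace ℝ (Fin n) => f q.1) p
      = (fderiv ℝ f p.1).comp (ContinuousLinearMap.fst ℝ _ _) := hg.fderiv
  have hG : HasFDerivAt (Hk 0 (fun q => f q.1))
      (f p.1 • ((((1 - ((0 : ℕ) : ℝ)) / 2) * u ^ ((1 - ((0 : ℕ) : ℝ)) / 2 - 1)) • uDeriv p)
        + (u ^ ((1 - ((0 : ℕ) : ℝ)) / 2)) •
            ((fderiv ℝ f p.1).comp (ContinuousLinearMap.fst ℝ _ _))) p := by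
    have := hasFDerivAt_mul_rpow (fun q => f q.1) ((1 - ((0 : ℕ) : ℝ)) / 2) p
      hg.differentiableAt hu.ne'
    rwa [hgd] at this
  have e1 : u ^ ((1 - (k : ℝ)) / 2) * u ^ ((1 - ((0 : ℕ) : ℝ)) / 2) = u ^ ((2 - (k : ℝ)) / 2) := by
    rw [← Real.rpow_add hu]; congr 1; push_cast; ring
  have e2 : u ^ ((1 - (k : ℝ)) / 2 - 1) * u ^ ((1 - ((0 : ℕ) : ℝ)) / 2) = u ^ (-(k : ℝ) / 2) := by
    rw [← Real.rpow_add hu]; congr 1; push_cast; ring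
  have e3 : u ^ ((1 - (k : ℝ)) / 2) * u ^ ((1 - ((0 : ℕ) : ℝ)) / 2 - 1) = u ^ (-(k : ℝ) / 2) := by
    rw [← Real.rpow_add hu]; congr 1; push_cast; ring
  rw [pbn, hF.fderiv, hG.fderiv]
  simp only [ContinuousLinearMap.add_apply, ContinuousLinearMap.smul_apply,
    ContinuousLinearMap.coe_comp', Function.comp_apply, ContinuousLinearMap.neg_apply,
    ContinuousLinearMap.prod_apply, ContinuousLinearMap.coe_snd', ContinuousLinearMap.coe_fst',
    uDeriv, fderivInnerCLM_apply, EuclideanSpace.inner_single_left,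
    EuclideanSpace.inner_single_right, inner_zero_left, inner_zero_right, map_zero,
    smul_eq_mul, conj_trivial, one_mul, mul_one, mul_zero, zero_mul, add_zero, zero_add,
    neg_zero, neg_add_rev]
  simp only [mul_add, Finset.mul_sum, ← Finset.sum_add_distrib]
  refine Finset.sum_congr rfl fun j _ => ?_
  linear_combination
    ((fderiv ℝ φ p) (0, EuclideanSpace.single j 1)
        * (fderiv ℝ f p.1) (EuclideanSpace.single j 1)) * e1
    + (((k : ℝ) - 1) * φ p * p.2 j * (fderiv ℝ f p.1) (EuclideanSpace.single j 1)) * e2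
    + (f p.1 * p.2 j * (fderiv ℝ φ p) (EuclideanSpace.single j 1, 0)) * e3
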